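/- Let Λ ⊂ ℝⁿ be a lattice, A a positive semidefinite n×n matrix with Λ contained in the range of A, and t ≥ 1 a real number. Then ρ_{A/t²}(Λ \ {0}) ≤ ρ_A(Λ \ {0})^{t²}, where ρ_X(T) = Σ_{y ∈ T ∩ ran(X)} exp(−π yᵀ X⁺ y) and X⁺ is the Moore–Penrose pseudoinverse. -/

import Mathlib

/-!
Uniqueness of the Moore–Penrose inverse gives `(A / t²)⁺ = t² A⁺`, so every term of the left-hand
series is the `t²`-th power of the corresponding term `a_z` of `S = ρ_A(Λ \ {0})`. As `0 ≤ a_z ≤ S`,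
`a_z ^ t² ≤ S ^ (t² - 1) * a_z`, and summing over `z` gives `S ^ t²`.

The analytic input is the convergence of `S`. On `ran A` the form `y ↦ yᵀ A⁺ y` is positive
definite (it equals `uᵀ A u` at `y = A u`), so in lattice coordinates it dominates `c ‖z‖²` for
some `c > 0`, and the series is bounded by a product of one-dimensional Gaussian sums.
-/

open Real Matrix

/-- `Ap` is the Moore–Penrose pseudoinverse of `A`. -/
def IsMoorePenrose {n : ℕ} (A Ap : Matrix (Fin n) (Fin n) ℝ) : Prop :=
  A * Ap * A = A ∧ Ap * A * Ap = Ap ∧ (A * Ap)ᵀ = A * Ap ∧ (Ap * A)ᵀ = Ap * A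

/-- The point of the `d`-dimensional lattice with basis matrix `C` given by `z : ℤᵈ`. -/
noncomputable def latPt {n d : ℕ} (C : Matrix (Fin n) (Fin d) ℝ) (z : Fin d → ℤ) : Fin n → ℝ :=
  C.mulVec fun i => (z i : ℝ)

namespace IsMoorePenrose

variable {n : ℕ} {A B B' : Matrix (Fin n) (Fin n) ℝ}

theorem unique (hB : IsMoorePenrose A B) (hB' : IsMoorePenrose A B') : B = B' := by
  obtain ⟨hB₁, hB₂, hB₃, hB₄⟩ := hB
  obtain ⟨hB'₁, hB'₂, hB'₃, hB'₄⟩ := hB'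
  have hleft : A * B = A * B' :=
    calc A * B = (A * B' * A) * B := by rw [hB'₁]
    _ = ((A * B) * (A * B'))ᵀ := by rw [transpose_mul, hB'₃, hB₃]; noncomm_ring
    _ = ((A * B * A) * B')ᵀ := by noncomm_ring
    _ = A * B' := by rw [hB₁, hB'₃]
  have hright : B * A = B' * A :=
    calc B * A = B * (A * B' * A) := by rw [hB'₁]
    _ = ((B' * A) * (B * A))ᵀ := by rw [transpose_mul, hB₄, hB'₄]; noncomm_ring
    _ = (B' * (A * B * A))ᵀ := by noncomm_ring
    _ = B' * A := by rw [hB₁, hB'₄]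
  calc B = B * A * B := hB₂.symm
  _ = B * (A * B') := by rw [Matrix.mul_assoc, hleft]
  _ = B' * A * B' := by rw [← Matrix.mul_assoc, hright]
  _ = B' := hB'₂

theorem inv_smul (h : IsMoorePenrose A B) {s : ℝ} (hs : s ≠ 0) :
    IsMoorePenrose (s⁻¹ • A) (s • B) := by
  obtain ⟨h₁, h₂, h₃, h₄⟩ := h
  have hleft : (s⁻¹ • A) * (s • B) = A * B := by
    rw [Matrix.smul_mul, Matrix.mul_smul, smul_smul, inv_mul_cancel₀ hs, one_smul]
  have hright : (s • B) * (s⁻¹ • A) = B * A := by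
    rw [Matrix.smul_mul, Matrix.mul_smul, smul_smul, mul_inv_cancel₀ hs, one_smul]
  exact ⟨by rw [hleft, Matrix.mul_smul, h₁], by rw [hright, Matrix.mul_smul, h₂],
    by rw [hleft]; exact h₃, by rw [hright]; exact h₄⟩

end IsMoorePenrose

section GeneralizedInverse

variable {ι : Type*} [Fintype ι]

theorem Matrix.IsSymm.mulVec_dotProduct_mulVec_mulVec {R : Type*} [CommSemiring R]
    {A B : Matrix ι ι R} (hA : A.IsSymm) (hAB : A * B * A = A) (u : ι → R) :
    (A *ᵥ u) ⬝ᵥ B *ᵥ (A *ᵥ u) = u ⬝ᵥ A *ᵥ u := by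
  calc (A *ᵥ u) ⬝ᵥ B *ᵥ (A *ᵥ u) = (u ᵥ* A) ⬝ᵥ (B * A) *ᵥ u := by
        rw [mulVec_mulVec, ← mulVec_transpose, hA.eq]
  _ = u ⬝ᵥ (A * B * A) *ᵥ u := by
        rw [dotProduct_mulVec, vecMul_vecMul, ← dotProduct_mulVec, Matrix.mul_assoc]
  _ = u ⬝ᵥ A *ᵥ u := by rw [hAB]

theorem Matrix.PosSemidef.dotProduct_mulVec_pos_of_mem_range {A B : Matrix ι ι ℝ}
    (hA : A.PosSemidef) (hAB : A * B * A = A) {y : ι → ℝ} (hy : y ∈ Set.range A.mulVec)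
    (hy₀ : y ≠ 0) : 0 < y ⬝ᵥ B *ᵥ y := by
  obtain ⟨u, rfl⟩ := hy
  rw [IsSymm.mulVec_dotProduct_mulVec_mulVec (A := A) hA.isHermitian hAB]
  refine (hA.dotProduct_mulVec_nonneg u).lt_of_ne fun h => hy₀ ?_
  exact (hA.dotProduct_mulVec_zero_iff u).mp h.symm

end GeneralizedInverse

theorem exists_pos_mul_norm_sq_le {E : Type*} [NormedAddCommGroup E] [NormedSpace ℝ E]
    [FiniteDimensional ℝ E] {g : E → ℝ} (hg : Continuous g)
    (hhom : ∀ (r : ℝ) (x : E), g (r • x) = r ^ 2 * g x) (hpos : ∀ x, x ≠ 0 → 0 < g x) :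
    ∃ c > 0, ∀ x, c * ‖x‖ ^ 2 ≤ g x := by
  have hg₀ : g 0 = 0 := by simpa using hhom 0 0
  cases subsingleton_or_nontrivial E
  · exact ⟨1, one_pos, fun x => by simp [Subsingleton.elim x 0, hg₀]⟩
  obtain ⟨x₀, hx₀, hmin⟩ := (isCompact_sphere (0 : E) 1).exists_isMinOn
    (NormedSpace.sphere_nonempty.mpr zero_le_one) hg.continuousOn
  have hx₀_ne : x₀ ≠ 0 := ne_zero_of_mem_unit_sphere ⟨x₀, hx₀⟩
  refine ⟨g x₀, hpos x₀ hx₀_ne, fun x => ?_⟩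
  rcases eq_or_ne x 0 with rfl | hx
  · simp [hg₀]
  have hx_pos : 0 < ‖x‖ := norm_pos_iff.mpr hx
  have hunit : ‖x‖⁻¹ • x ∈ Metric.sphere (0 : E) 1 := by
    simp [norm_smul, hx_pos.ne']
  calc g x₀ * ‖x‖ ^ 2 ≤ g (‖x‖⁻¹ • x) * ‖x‖ ^ 2 := by gcongr; exact hmin hunit
  _ = g x := by rw [hhom, mul_comm, ← mul_assoc, ← mul_pow, mul_inv_cancel₀ hx_pos.ne', one_pow,
      one_mul]

theorem Summable.fin_prod_of_nonneg {α : Type*} {h : α → ℝ} (h₀ : ∀ a, 0 ≤ h a)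
    (hs : Summable h) : ∀ {d : ℕ}, Summable fun z : Fin d → α => ∏ i, h (z i)
  | 0 => .of_finite
  | d + 1 => by
    rw [← (Fin.consEquiv fun _ : Fin (d + 1) => α).summable_iff]
    refine (hs.mul_of_nonneg (hs.fin_prod_of_nonneg h₀) (fun _ => h₀ _)
      (fun _ => Finset.prod_nonneg fun _ _ => h₀ _)).congr fun p => ?_
    simp [Fin.consEquiv, Fin.prod_univ_succ]

theorem summable_exp_neg_pi_mul_sum_sq_int {d : ℕ} {T : ℝ} (hT : 0 < T) :
    Summable fun z : Fin d → ℤ => exp (-π * (T * ∑ i, (z i : ℝ) ^ 2)) := by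
  have hint : Summable fun m : ℤ => exp (-π * (T * (m : ℝ) ^ 2)) := by
    -- the Jacobi theta bound with `S = 0`, `k = 0` is exactly this Gaussian sum
    simpa using summable_pow_mul_jacobiTheta₂_term_bound 0 hT 0
  refine (hint.fin_prod_of_nonneg fun _ => (exp_pos _).le).congr fun z => ?_
  rw [← exp_sum, Finset.mul_sum, Finset.mul_sum]

theorem mulVec_mem_of_forall_latPt_mem {n d : ℕ} {C : Matrix (Fin n) (Fin d) ℝ}
    {S : Submodule ℝ (Fin n → ℝ)} (hS : ∀ z, latPt C z ∈ S) (x : Fin d → ℝ) : C *ᵥ x ∈ S := by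
  have hcols : Submodule.span ℝ (Set.range C.col) ≤ S := by
    refine Submodule.span_le.mpr (Set.range_subset_iff.mpr fun j => ?_)
    have hcol : latPt C (Pi.single j 1) = C.col j := by
      rw [latPt, ← mulVec_single_one]
      congr 1
      ext i
      simp [Pi.single_apply]
    exact hcol ▸ hS _
  exact hcols (range_mulVecLin C ▸ LinearMap.mem_range_self C.mulVecLin x)

theorem summable_exp_neg_pi_latPt {n d : ℕ} {C : Matrix (Fin n) (Fin d) ℝ}
    (hC : LinearIndependent ℝ C.col) {A B : Matrix (Fin n) (Fin n) ℝ} (hA : A.PosSemidef)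
    (hAB : A * B * A = A) (hran : ∀ z, latPt C z ∈ Set.range A.mulVec) :
    Summable fun z : Fin d → ℤ => exp (-π * (latPt C z ⬝ᵥ B *ᵥ latPt C z)) := by
  rcases Nat.eq_zero_or_pos d with rfl | hd
  · exact .of_finite
  have hpos (x : Fin d → ℝ) (hx : x ≠ 0) : 0 < (C *ᵥ x) ⬝ᵥ B *ᵥ (C *ᵥ x) :=
    hA.dotProduct_mulVec_pos_of_mem_range hAB
      (mulVec_mem_of_forall_latPt_mem (S := LinearMap.range A.mulVecLin) hran x)
      fun h => hx (mulVec_injective_iff.mpr hC (h.trans (mulVec_zero C).symm))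
  obtain ⟨c, hc, hcoer⟩ := exists_pos_mul_norm_sq_le (by fun_prop)
    (fun r x => by simp only [mulVec_smul, smul_dotProduct, dotProduct_smul, smul_eq_mul]; ring)
    hpos
  refine (summable_exp_neg_pi_mul_sum_sq_int (div_pos hc (Nat.cast_pos.mpr hd))).of_nonneg_of_le
    (fun _ => (exp_pos _).le) fun z => exp_le_exp.mpr ?_
  set x : Fin d → ℝ := fun i => (z i : ℝ)
  have hsum : ∑ i, x i ^ 2 ≤ d * ‖x‖ ^ 2 := by
    calc ∑ i, x i ^ 2 ≤ ∑ _i : Fin d, ‖x‖ ^ 2 := Finset.sum_le_sum fun i _ => by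
          simpa only [norm_eq_abs, sq_abs] using
            pow_le_pow_left₀ (norm_nonneg _) (norm_le_pi_norm x i) 2
    _ = d * ‖x‖ ^ 2 := by simp
  have hlow : c / d * ∑ i, x i ^ 2 ≤ latPt C z ⬝ᵥ B *ᵥ latPt C z :=
    calc c / d * ∑ i, x i ^ 2 ≤ c / d * (d * ‖x‖ ^ 2) := by gcongr
    _ = c * ‖x‖ ^ 2 := by field_simp
    _ ≤ _ := hcoer x
  exact mul_le_mul_of_nonpos_left hlow (neg_nonpos.mpr pi_pos.le)

theorem tsum_rpow_le_rpow_tsum {ι : Type*} {f : ι → ℝ} (hf₀ : ∀ i, 0 ≤ f i) (hf : Summable f)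
    {p : ℝ} (hp : 1 ≤ p) : ∑' i, f i ^ p ≤ (∑' i, f i) ^ p := by
  have hp' : p - 1 + 1 ≠ 0 := by linarith
  have hsplit {x : ℝ} (hx : 0 ≤ x) : x ^ p = x ^ (p - 1) * x := by
    conv_lhs => rw [← sub_add_cancel p 1, rpow_add' hx hp', rpow_one]
  have hle (i : ι) : f i ^ p ≤ (∑' j, f j) ^ (p - 1) * f i := by
    rw [hsplit (hf₀ i)]
    exact mul_le_mul_of_nonneg_right
      (rpow_le_rpow (hf₀ i) (hf.le_tsum i fun j _ => hf₀ j) (by linarith)) (hf₀ i)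
  calc ∑' i, f i ^ p ≤ ∑' i, (∑' j, f j) ^ (p - 1) * f i :=
        ((hf.mul_left _).of_nonneg_of_le (fun i => rpow_nonneg (hf₀ i) _) hle).tsum_le_tsum hle
          (hf.mul_left _)
  _ = (∑' i, f i) ^ p := by rw [tsum_mul_left, hsplit (tsum_nonneg hf₀)]

/-- For a lattice `Λ ⊆ ran(A)` with `A ⪰ 0` and `t ≥ 1`,
`ρ_{A/t²}(Λ \ {0}) ≤ ρ_A(Λ \ {0})^{t²}`, where `ρ_X(T) = Σ_{y∈T} exp(−π yᵀ X⁺ y)`. -/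
theorem stmt1 {n d : ℕ} (C : Matrix (Fin n) (Fin d) ℝ)
    (hC : LinearIndependent ℝ fun j : Fin d => fun i => C i j)
    (A Ap Ap' : Matrix (Fin n) (Fin n) ℝ) (hA : A.PosSemidef)
    (hAp : IsMoorePenrose A Ap)
    (t : ℝ) (ht : 1 ≤ t)
    (hAp' : IsMoorePenrose ((t ^ 2)⁻¹ • A) Ap')
    (hran : ∀ z : Fin d → ℤ, latPt C z ∈ Set.range A.mulVec) :
    (∑' z : {z : Fin d → ℤ // z ≠ 0},
        Real.exp (-π * (latPt C z.1 ⬝ᵥ Ap'.mulVec (latPt C z.1)))) ≤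
      (∑' z : {z : Fin d → ℤ // z ≠ 0},
        Real.exp (-π * (latPt C z.1 ⬝ᵥ Ap.mulVec (latPt C z.1)))) ^ (t ^ 2) := by
  have hAp'_eq : Ap' = t ^ 2 • Ap := hAp'.unique (hAp.inv_smul (by positivity))
  have hterm (y : Fin n → ℝ) :
      exp (-π * (y ⬝ᵥ Ap' *ᵥ y)) = exp (-π * (y ⬝ᵥ Ap *ᵥ y)) ^ (t ^ 2) := by
    rw [hAp'_eq, smul_mulVec, dotProduct_smul, smul_eq_mul, ← exp_mul]
    ring_nf
  simp only [hterm]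
  exact tsum_rpow_le_rpow_tsum (fun _ => (exp_pos _).le)
    ((summable_exp_neg_pi_latPt hC hA hAp.1 hran).comp_injective Subtype.val_injective)
    (one_le_pow₀ ht)
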